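/- Let A{_τ×_σ}B be a smash biproduct bialgebra with σ right conormal, and let R = Σ R¹⊗R²⊗R³⊗R⁴ ∈ (A⊗B)⊗(A⊗B) be a quasitriangular structure. Then Σ a_τ R¹ε_B(R²) ⊗ ε_A(R³)1_{Bτ}R⁴ = Σ R¹a_σε_B(R²_σ) ⊗ ε_A(R³)R⁴ for all a∈A, where on the left τ is applied to a⊗1_B (yielding 1_{Bτ}⊗a_τ) and on the right σ is applied to R²⊗a. -/

import Mathlib

/-!
Apply `π_A ⊗ π_B` to (QT4) for `h = a ⊗ 1`. In a smash biproduct the counits are multiplicative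
up to the scalars `ε_A(1)`, `ε_B(1)`, whose product is `1`, and `Δ_B(1) = ε_A(1) 1 ⊗ 1`; by right
conormality `π_B` of a product only sees the counits of the `A`-parts. On `R Δ(a ⊗ 1)` the
`τ`-twist then disappears under `ε_B ⊗ ε_A`, leaving the right-hand side; on `Δᶜᵒᵖ(a ⊗ 1) R` the
`σ`-twist disappears because `σ(1 ⊗ R¹) = R¹ ⊗ 1`, leaving the left-hand side.
-/

open TensorProduct

noncomputable section

variable (k : Type*) [Field k]

/-- Componentwise multiplication on `H ⊗ H` induced by a multiplication map `m` on `H`. -/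
def mul2 (H : Type*) [AddCommGroup H] [Module k H] (m : H ⊗[k] H →ₗ[k] H) :
    (H ⊗[k] H) ⊗[k] (H ⊗[k] H) →ₗ[k] H ⊗[k] H :=
  (TensorProduct.map m m) ∘ₗ (TensorProduct.tensorTensorTensorComm k H H H H).toLinearMap

/-- Componentwise multiplication on `H ⊗ (H ⊗ H)`. -/
def mul3 (H : Type*) [AddCommGroup H] [Module k H] (m : H ⊗[k] H →ₗ[k] H) :
    (H ⊗[k] (H ⊗[k] H)) ⊗[k] (H ⊗[k] (H ⊗[k] H)) →ₗ[k] H ⊗[k] (H ⊗[k] H) :=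
  (TensorProduct.map m (mul2 k H m)) ∘ₗ
    (TensorProduct.tensorTensorTensorComm k H (H ⊗[k] H) H (H ⊗[k] H)).toLinearMap

/-- `R ∈ H ⊗ H` is a quasitriangular structure with respect to the bialgebra
structure data `(m, Δ, e, ε)` on `H`:
(QT1) `(ε⊗id)(R) = e = (id⊗ε)(R)`, (QT2) `(Δ⊗id)(R) = R₁₃R₂₃`,
(QT3) `(id⊗Δ)(R) = R₁₃R₁₂`, (QT4) `RΔ(h) = Δᶜᵒᵖ(h)R`. -/
def IsQT (H : Type*) [AddCommGroup H] [Module k H]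
    (m : H ⊗[k] H →ₗ[k] H) (Δ : H →ₗ[k] H ⊗[k] H) (e : H) (ε : H →ₗ[k] k)
    (R : H ⊗[k] H) : Prop :=
  (TensorProduct.lid k H) ((LinearMap.rTensor H ε) R) = e ∧
  (TensorProduct.rid k H) ((LinearMap.lTensor H ε) R) = e ∧
  (TensorProduct.assoc k H H H).toLinearMap ((LinearMap.rTensor H Δ) R) =
    mul3 k H m (((LinearMap.lTensor H (TensorProduct.mk k H H e)) R) ⊗ₜ[k] (e ⊗ₜ[k] R)) ∧
  (LinearMap.lTensor H Δ) R =
    mul3 k H m (((LinearMap.lTensor H (TensorProduct.mk k H H e)) R) ⊗ₜ[k]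
      ((LinearMap.lTensor H ((TensorProduct.mk k H H).flip e)) R)) ∧
  ∀ h : H, mul2 k H m (R ⊗ₜ[k] Δ h) =
    mul2 k H m ((TensorProduct.comm k H H (Δ h)) ⊗ₜ[k] R)

variable (A B : Type*)
  [Ring A] [Algebra k A] [Coalgebra k A]
  [Ring B] [Algebra k B] [Coalgebra k B]

variable (σ : B ⊗[k] A →ₗ[k] A ⊗[k] B) (τ : A ⊗[k] B →ₗ[k] B ⊗[k] A)

/-- The smash product multiplication `(a⊗b)(a'⊗b') = Σ aa'_σ ⊗ b_σ b'` on `A ⊗ B`. -/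
def smashMul : (A ⊗[k] B) ⊗[k] (A ⊗[k] B) →ₗ[k] A ⊗[k] B :=
  (TensorProduct.map (LinearMap.mul' k A) (LinearMap.mul' k B))
    ∘ₗ (TensorProduct.assoc k A A (B ⊗[k] B)).symm.toLinearMap
    ∘ₗ (TensorProduct.map LinearMap.id
         ((TensorProduct.assoc k A B B).toLinearMap
           ∘ₗ (TensorProduct.map σ LinearMap.id)
           ∘ₗ (TensorProduct.assoc k B A B).symm.toLinearMap))
    ∘ₗ (TensorProduct.assoc k A B (A ⊗[k] B)).toLinearMap

/-- The smash coproduct comultiplication `Δ(a⊗b) = Σ a₍₁₎ ⊗ b₍₁₎τ ⊗ a₍₂₎τ ⊗ b₍₂₎` on `A ⊗ B`. -/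
def smashComul : A ⊗[k] B →ₗ[k] (A ⊗[k] B) ⊗[k] (A ⊗[k] B) :=
  (TensorProduct.assoc k A B (A ⊗[k] B)).symm.toLinearMap
    ∘ₗ (TensorProduct.map LinearMap.id
         ((TensorProduct.assoc k B A B).toLinearMap
           ∘ₗ (TensorProduct.map τ LinearMap.id)
           ∘ₗ (TensorProduct.assoc k A B B).symm.toLinearMap))
    ∘ₗ (TensorProduct.assoc k A A (B ⊗[k] B)).toLinearMap
    ∘ₗ (TensorProduct.map (Coalgebra.comul : A →ₗ[k] A ⊗[k] A)
          (Coalgebra.comul : B →ₗ[k] B ⊗[k] B))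

/-- The counit `ε_A ⊗ ε_B` of `A ⊗ B`. -/
def smashCounit : A ⊗[k] B →ₗ[k] k :=
  (LinearMap.mul' k k) ∘ₗ
    TensorProduct.map (Coalgebra.counit : A →ₗ[k] k) (Coalgebra.counit : B →ₗ[k] k)

/-- The projection `π_A = id_A ⊗ ε_B`. -/
def piA : A ⊗[k] B →ₗ[k] A :=
  (TensorProduct.rid k A).toLinearMap ∘ₗ LinearMap.lTensor A (Coalgebra.counit : B →ₗ[k] k)

/-- The projection `π_B = ε_A ⊗ id_B`. -/
def piB : A ⊗[k] B →ₗ[k] B :=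
  (TensorProduct.lid k B).toLinearMap ∘ₗ LinearMap.rTensor B (Coalgebra.counit : A →ₗ[k] k)

/-- `A {_τ×_σ} B` is a smash biproduct bialgebra. -/
structure IsSmashBiproduct : Prop where
  mul_assoc : ∀ x y z : A ⊗[k] B,
    smashMul k A B σ ((smashMul k A B σ (x ⊗ₜ[k] y)) ⊗ₜ[k] z)
      = smashMul k A B σ (x ⊗ₜ[k] (smashMul k A B σ (y ⊗ₜ[k] z)))
  one_mul : ∀ x : A ⊗[k] B, smashMul k A B σ (((1:A) ⊗ₜ[k] (1:B)) ⊗ₜ[k] x) = x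
  mul_one : ∀ x : A ⊗[k] B, smashMul k A B σ (x ⊗ₜ[k] ((1:A) ⊗ₜ[k] (1:B))) = x
  sigma_one_left : ∀ b : B, σ (b ⊗ₜ[k] (1:A)) = (1:A) ⊗ₜ[k] b
  sigma_one_right : ∀ a : A, σ ((1:B) ⊗ₜ[k] a) = a ⊗ₜ[k] (1:B)
  comul_coassoc : ∀ x : A ⊗[k] B,
    (TensorProduct.assoc k (A ⊗[k] B) (A ⊗[k] B) (A ⊗[k] B)).toLinearMap
        ((LinearMap.rTensor (A ⊗[k] B) (smashComul k A B τ)) (smashComul k A B τ x))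
      = (LinearMap.lTensor (A ⊗[k] B) (smashComul k A B τ)) (smashComul k A B τ x)
  counit_comul : ∀ x : A ⊗[k] B,
    (TensorProduct.lid k (A ⊗[k] B))
        ((LinearMap.rTensor (A ⊗[k] B) (smashCounit k A B)) (smashComul k A B τ x)) = x
  comul_counit : ∀ x : A ⊗[k] B,
    (TensorProduct.rid k (A ⊗[k] B))
        ((LinearMap.lTensor (A ⊗[k] B) (smashCounit k A B)) (smashComul k A B τ x)) = x
  tau_counit_left : ∀ (a : A) (b : B),
    (TensorProduct.lid k A)
        ((LinearMap.rTensor A (Coalgebra.counit : B →ₗ[k] k)) (τ (a ⊗ₜ[k] b)))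
      = (Coalgebra.counit : B →ₗ[k] k) b • a
  tau_counit_right : ∀ (a : A) (b : B),
    (TensorProduct.rid k B)
        ((LinearMap.lTensor B (Coalgebra.counit : A →ₗ[k] k)) (τ (a ⊗ₜ[k] b)))
      = (Coalgebra.counit : A →ₗ[k] k) a • b
  comul_mul : ∀ x y : A ⊗[k] B,
    smashComul k A B τ (smashMul k A B σ (x ⊗ₜ[k] y))
      = mul2 k (A ⊗[k] B) (smashMul k A B σ)
          ((smashComul k A B τ x) ⊗ₜ[k] (smashComul k A B τ y))
  comul_one : smashComul k A B τ ((1:A) ⊗ₜ[k] (1:B))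
      = ((1:A) ⊗ₜ[k] (1:B)) ⊗ₜ[k] ((1:A) ⊗ₜ[k] (1:B))
  counit_mul : ∀ x y : A ⊗[k] B,
    smashCounit k A B (smashMul k A B σ (x ⊗ₜ[k] y)) = smashCounit k A B x * smashCounit k A B y
  counit_one : smashCounit k A B ((1:A) ⊗ₜ[k] (1:B)) = 1

/-- `σ` is right conormal: `(ε_A ⊗ id_B) ∘ σ = id_B ⊗ ε_A`. -/
def RightConormal : Prop := ∀ (b : B) (a : A),
  (TensorProduct.lid k B)
      ((LinearMap.rTensor B (Coalgebra.counit : A →ₗ[k] k)) (σ (b ⊗ₜ[k] a)))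
    = (Coalgebra.counit : A →ₗ[k] k) a • b

/-- `σ` is left conormal: `(id_A ⊗ ε_B) ∘ σ = ε_B ⊗ id_A`. -/
def LeftConormal : Prop := ∀ (b : B) (a : A),
  (TensorProduct.rid k A)
      ((LinearMap.lTensor A (Coalgebra.counit : B →ₗ[k] k)) (σ (b ⊗ₜ[k] a)))
    = (Coalgebra.counit : B →ₗ[k] k) b • a

/-- `τ` is left normal: `τ(a ⊗ 1_B) = 1_B ⊗ a`. -/
def LeftNormal : Prop := ∀ a : A, τ (a ⊗ₜ[k] (1:B)) = (1:B) ⊗ₜ[k] a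

/-- `τ` is right normal: `τ(1_A ⊗ b) = b ⊗ 1_A`. -/
def RightNormal : Prop := ∀ b : B, τ ((1:A) ⊗ₜ[k] b) = b ⊗ₜ[k] (1:A)

section SmashBiproduct

variable {k : Type*} [Field k] {A B : Type*} [Ring A] [Algebra k A] [Ring B] [Algebra k B]

theorem mul2_tmul {H : Type*} [AddCommGroup H] [Module k H] (m : H ⊗[k] H →ₗ[k] H)
    (p q r s : H) :
    mul2 k H m ((p ⊗ₜ q) ⊗ₜ (r ⊗ₜ s)) = m (p ⊗ₜ r) ⊗ₜ m (q ⊗ₜ s) := by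
  simp [mul2]

@[simp]
theorem piA_tmul [Coalgebra k B] (a : A) (b : B) :
    piA k A B (a ⊗ₜ b) = Coalgebra.counit (R := k) b • a := by
  simp [piA]

@[simp]
theorem piB_tmul [Coalgebra k A] (a : A) (b : B) :
    piB k A B (a ⊗ₜ b) = Coalgebra.counit (R := k) a • b := by
  simp [piB]

theorem smashMul_tmul (σ : B ⊗[k] A →ₗ[k] A ⊗[k] B) (a a' : A) (b b' : B) :
    smashMul k A B σ ((a ⊗ₜ b) ⊗ₜ (a' ⊗ₜ b')) =
      map (LinearMap.mulLeft k a) (LinearMap.mulRight k b') (σ (b ⊗ₜ a')) := by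
  simp only [smashMul, LinearMap.coe_comp, Function.comp_apply, LinearEquiv.coe_coe,
    assoc_tmul, assoc_symm_tmul, map_tmul, LinearMap.id_coe, id_eq]
  induction σ (b ⊗ₜ a') using TensorProduct.induction_on with
  | zero => simp
  | tmul c d => simp
  | add u v hu hv => simp only [map_add, tmul_add, add_tmul, hu, hv]

def smashComulCore (τ : A ⊗[k] B →ₗ[k] B ⊗[k] A) :
    (A ⊗[k] A) ⊗[k] (B ⊗[k] B) →ₗ[k] (A ⊗[k] B) ⊗[k] (A ⊗[k] B) :=
  (TensorProduct.assoc k A B (A ⊗[k] B)).symm.toLinearMap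
    ∘ₗ (TensorProduct.map LinearMap.id
         ((TensorProduct.assoc k B A B).toLinearMap
           ∘ₗ (TensorProduct.map τ LinearMap.id)
           ∘ₗ (TensorProduct.assoc k A B B).symm.toLinearMap))
    ∘ₗ (TensorProduct.assoc k A A (B ⊗[k] B)).toLinearMap

theorem smashComulCore_tmul (τ : A ⊗[k] B →ₗ[k] B ⊗[k] A) (x x' : A) (y' y : B) :
    smashComulCore τ ((x ⊗ₜ x') ⊗ₜ (y' ⊗ₜ y)) =
      map (TensorProduct.mk k A B x) ((TensorProduct.mk k A B).flip y) (τ (x' ⊗ₜ y')) := by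
  simp only [smashComulCore, LinearMap.coe_comp, Function.comp_apply, LinearEquiv.coe_coe,
    assoc_tmul, map_tmul, assoc_symm_tmul, LinearMap.id_coe, id_eq]
  induction τ (x' ⊗ₜ y') using TensorProduct.induction_on with
  | zero => simp
  | tmul c d => simp
  | add u v hu hv => simp only [map_add, add_tmul, tmul_add, hu, hv]

theorem piB_piB_map_mk [Coalgebra k A] (x : A) (y : B) (w : B ⊗[k] A) :
    map (piB k A B) (piB k A B)
        (map (TensorProduct.mk k A B x) ((TensorProduct.mk k A B).flip y) w) =
      Coalgebra.counit (R := k) x •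
        (TensorProduct.rid k B (LinearMap.lTensor B Coalgebra.counit w) ⊗ₜ y) := by
  induction w using TensorProduct.induction_on with
  | zero => simp
  | tmul u v => simp [smul_tmul', smul_smul, mul_comm]
  | add u v hu hv => simp only [map_add, hu, hv, add_tmul, smul_add]

variable [Coalgebra k A] [Coalgebra k B]
  {σ : B ⊗[k] A →ₗ[k] A ⊗[k] B} {τ : A ⊗[k] B →ₗ[k] B ⊗[k] A}

theorem smashComul_eq_comp :
    smashComul k A B τ = smashComulCore τ ∘ₗ map Coalgebra.comul Coalgebra.comul :=
  rfl

namespace IsSmashBiproduct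

theorem counit_one_mul_counit_one (hsb : IsSmashBiproduct k A B σ τ) :
    Coalgebra.counit (R := k) (1 : A) * Coalgebra.counit (R := k) (1 : B) = 1 := by
  simpa [smashCounit] using hsb.counit_one

theorem counitA_mul (hsb : IsSmashBiproduct k A B σ τ) (x y : A) :
    Coalgebra.counit (R := k) (x * y) =
      Coalgebra.counit (R := k) (1 : B) * (Coalgebra.counit x * Coalgebra.counit y) := by
  have hB1 : Coalgebra.counit (R := k) (1 : B) ≠ 0 :=
    right_ne_zero_of_mul_eq_one hsb.counit_one_mul_counit_one
  have h := hsb.counit_mul (x ⊗ₜ 1) (y ⊗ₜ 1)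
  simp only [smashCounit, smashMul_tmul, LinearMap.mulRight_one, hsb.sigma_one_right, map_tmul,
    LinearMap.mulLeft_apply, LinearMap.id_coe, id_eq, LinearMap.coe_comp, Function.comp_apply,
    LinearMap.mul'_apply] at h
  apply mul_right_cancel₀ hB1
  linear_combination h

theorem counitB_mul (hsb : IsSmashBiproduct k A B σ τ) (x y : B) :
    Coalgebra.counit (R := k) (x * y) =
      Coalgebra.counit (R := k) (1 : A) * (Coalgebra.counit x * Coalgebra.counit y) := by
  have hA1 : Coalgebra.counit (R := k) (1 : A) ≠ 0 :=
    left_ne_zero_of_mul_eq_one hsb.counit_one_mul_counit_one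
  have h := hsb.counit_mul (1 ⊗ₜ x) (1 ⊗ₜ y)
  simp only [smashCounit, smashMul_tmul, LinearMap.mulLeft_one, hsb.sigma_one_left, map_tmul,
    LinearMap.id_coe, id_eq, LinearMap.mulRight_apply, LinearMap.coe_comp, Function.comp_apply,
    LinearMap.mul'_apply] at h
  apply mul_left_cancel₀ hA1
  linear_combination h

theorem piA_map_mulLeft_mulRight (hsb : IsSmashBiproduct k A B σ τ) (a : A) (b : B)
    (t : A ⊗[k] B) :
    piA k A B (map (LinearMap.mulLeft k a) (LinearMap.mulRight k b) t) =
      (Coalgebra.counit (R := k) (1 : A) * Coalgebra.counit b) • (a * piA k A B t) := by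
  induction t using TensorProduct.induction_on with
  | zero => simp
  | tmul c d =>
    simp only [map_tmul, LinearMap.mulLeft_apply, LinearMap.mulRight_apply, piA_tmul,
      hsb.counitB_mul, mul_smul_comm, smul_smul]
    congr 1
    ring
  | add u v hu hv => simp only [map_add, hu, hv, mul_add, smul_add]

theorem piB_map_mulLeft_mulRight (hsb : IsSmashBiproduct k A B σ τ) (a : A) (b : B)
    (t : A ⊗[k] B) :
    piB k A B (map (LinearMap.mulLeft k a) (LinearMap.mulRight k b) t) =
      (Coalgebra.counit (R := k) (1 : B) * Coalgebra.counit a) • (piB k A B t * b) := by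
  induction t using TensorProduct.induction_on with
  | zero => simp
  | tmul c d =>
    simp only [map_tmul, LinearMap.mulLeft_apply, LinearMap.mulRight_apply, piB_tmul,
      hsb.counitA_mul, smul_mul_assoc, smul_smul]
    congr 1
    ring
  | add u v hu hv => simp only [map_add, hu, hv, add_mul, smul_add]

theorem piB_smashMul_tmul (hsb : IsSmashBiproduct k A B σ τ) (hrc : RightConormal k A B σ)
    (a a' : A) (b b' : B) :
    piB k A B (smashMul k A B σ ((a ⊗ₜ b) ⊗ₜ (a' ⊗ₜ b'))) =
      (Coalgebra.counit (R := k) (1 : B) * Coalgebra.counit a * Coalgebra.counit a') •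
        (b * b') := by
  have hσ : piB k A B (σ (b ⊗ₜ a')) = Coalgebra.counit (R := k) a' • b := hrc b a'
  rw [smashMul_tmul, hsb.piB_map_mulLeft_mulRight, hσ, smul_mul_assoc, smul_smul]

theorem piB_piB_smashComul (hsb : IsSmashBiproduct k A B σ τ) (a : A) (b : B) :
    map (piB k A B) (piB k A B) (smashComul k A B τ (a ⊗ₜ b)) =
      Coalgebra.counit (R := k) a • Coalgebra.comul (R := k) b := by
  have hcore : map (piB k A B) (piB k A B) ∘ₗ smashComulCore τ =
      (TensorProduct.lid k (B ⊗[k] B)).toLinearMap ∘ₗ LinearMap.rTensor (B ⊗[k] B)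
        (Coalgebra.counit ∘ₗ (TensorProduct.rid k A).toLinearMap ∘ₗ
          LinearMap.lTensor A Coalgebra.counit) := by
    refine TensorProduct.ext_fourfold' fun x x' y' y => ?_
    simp [smashComulCore_tmul, piB_piB_map_mk, hsb.tau_counit_right, smul_tmul', smul_smul,
      mul_comm]
  rw [smashComul_eq_comp, LinearMap.comp_apply, map_tmul, ← LinearMap.comp_apply, hcore]
  simp

theorem comulB_one (hsb : IsSmashBiproduct k A B σ τ) :
    Coalgebra.comul (R := k) (1 : B) =
      Coalgebra.counit (R := k) (1 : A) • ((1 : B) ⊗ₜ (1 : B)) := by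
  have hA1 : Coalgebra.counit (R := k) (1 : A) ≠ 0 :=
    left_ne_zero_of_mul_eq_one hsb.counit_one_mul_counit_one
  have h := congrArg (map (piB k A B) (piB k A B)) hsb.comul_one
  rw [hsb.piB_piB_smashComul] at h
  apply smul_right_injective _ hA1
  simp [h, smul_tmul', smul_smul]

theorem piA_piB_mul2_tmul_map_mk (hsb : IsSmashBiproduct k A B σ τ)
    (hrc : RightConormal k A B σ) (r₁ r₃ x : A) (r₂ r₄ y : B) (w : B ⊗[k] A) :
    map (piA k A B) (piB k A B) (mul2 k (A ⊗[k] B) (smashMul k A B σ)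
        (((r₁ ⊗ₜ r₂) ⊗ₜ (r₃ ⊗ₜ r₄)) ⊗ₜ map (TensorProduct.mk k A B x)
          ((TensorProduct.mk k A B).flip y) w)) =
      (Coalgebra.counit (TensorProduct.rid k B (LinearMap.lTensor B Coalgebra.counit w)) *
          Coalgebra.counit (R := k) r₃) •
        ((r₁ * piA k A B (σ (r₂ ⊗ₜ x))) ⊗ₜ (r₄ * y)) := by
  induction w using TensorProduct.induction_on with
  | zero => simp
  | tmul b' a' =>
    simp only [map_tmul, TensorProduct.mk_apply, LinearMap.flip_apply, mul2_tmul]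
    rw [hsb.piB_smashMul_tmul hrc, smashMul_tmul, hsb.piA_map_mulLeft_mulRight]
    simp only [LinearMap.lTensor_tmul, TensorProduct.rid_tmul, map_smul, smul_eq_mul, smul_tmul',
      tmul_smul, smul_smul]
    congr 2
    linear_combination (Coalgebra.counit (R := k) b' * Coalgebra.counit (R := k) a' *
      Coalgebra.counit (R := k) r₃) * hsb.counit_one_mul_counit_one
  | add u v hu hv => simp only [map_add, tmul_add, hu, hv, add_mul, add_smul]

theorem piA_piB_mul2_tmul_smashComul (hsb : IsSmashBiproduct k A B σ τ)
    (hrc : RightConormal k A B σ) (r₁ r₃ a : A) (r₂ r₄ b : B) :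
    map (piA k A B) (piB k A B) (mul2 k (A ⊗[k] B) (smashMul k A B σ)
        (((r₁ ⊗ₜ r₂) ⊗ₜ (r₃ ⊗ₜ r₄)) ⊗ₜ smashComul k A B τ (a ⊗ₜ b))) =
      Coalgebra.counit (R := k) r₃ • ((r₁ * piA k A B (σ (r₂ ⊗ₜ a))) ⊗ₜ (r₄ * b)) := by
  have hcore : map (piA k A B) (piB k A B) ∘ₗ mul2 k (A ⊗[k] B) (smashMul k A B σ) ∘ₗ
      TensorProduct.mk k _ _ ((r₁ ⊗ₜ r₂) ⊗ₜ (r₃ ⊗ₜ r₄)) ∘ₗ smashComulCore τ =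
      Coalgebra.counit (R := k) r₃ • map
        (LinearMap.mulLeft k r₁ ∘ₗ piA k A B ∘ₗ σ ∘ₗ TensorProduct.mk k B A r₂ ∘ₗ
          (TensorProduct.rid k A).toLinearMap ∘ₗ LinearMap.lTensor A Coalgebra.counit)
        (LinearMap.mulLeft k r₄ ∘ₗ
          (TensorProduct.lid k B).toLinearMap ∘ₗ LinearMap.rTensor B Coalgebra.counit) := by
    refine TensorProduct.ext_fourfold' fun x x' y' y => ?_
    simp only [LinearMap.coe_comp, Function.comp_apply, smashComulCore_tmul,
      TensorProduct.mk_apply, hsb.piA_piB_mul2_tmul_map_mk hrc, hsb.tau_counit_right, map_smul,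
      smul_eq_mul, LinearMap.smul_apply, map_tmul, LinearEquiv.coe_coe, LinearMap.lTensor_tmul,
      rid_tmul, LinearMap.mulLeft_apply, LinearMap.rTensor_tmul, lid_tmul, tmul_smul,
      ← smul_tmul', smul_smul]
    congr 1
    ring
  rw [smashComul_eq_comp, LinearMap.comp_apply, map_tmul]
  have := LinearMap.congr_fun hcore (Coalgebra.comul a ⊗ₜ Coalgebra.comul b)
  simpa using this

theorem piA_piB_mul2_comm_map_mk_one_tmul (hsb : IsSmashBiproduct k A B σ τ)
    (hrc : RightConormal k A B σ) (x r₁ r₃ : A) (r₂ r₄ : B) (w : B ⊗[k] A) :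
    map (piA k A B) (piB k A B) (mul2 k (A ⊗[k] B) (smashMul k A B σ)
        (TensorProduct.comm k _ _ (map (TensorProduct.mk k A B x)
          ((TensorProduct.mk k A B).flip 1) w) ⊗ₜ ((r₁ ⊗ₜ r₂) ⊗ₜ (r₃ ⊗ₜ r₄)))) =
      (Coalgebra.counit (R := k) (1 : B) * Coalgebra.counit x * Coalgebra.counit r₂ *
          Coalgebra.counit r₃) •
        map (LinearMap.mulRight k r₁) (LinearMap.mulRight k r₄) (TensorProduct.comm k B A w) := by
  induction w using TensorProduct.induction_on with
  | zero => simp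
  | tmul b' a' =>
    simp only [map_tmul, TensorProduct.mk_apply, LinearMap.flip_apply, TensorProduct.comm_tmul,
      mul2_tmul]
    rw [hsb.piB_smashMul_tmul hrc, smashMul_tmul, hsb.sigma_one_right]
    simp [smul_tmul', smul_smul, mul_right_comm _ (Coalgebra.counit r₂)]
  | add u v hu hv => simp only [map_add, add_tmul, hu, hv, smul_add]

theorem piA_piB_mul2_comm_smashComul_tmul_one (hsb : IsSmashBiproduct k A B σ τ)
    (hrc : RightConormal k A B σ) (a r₁ r₃ : A) (r₂ r₄ : B) :
    map (piA k A B) (piB k A B) (mul2 k (A ⊗[k] B) (smashMul k A B σ)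
        (TensorProduct.comm k _ _ (smashComul k A B τ (a ⊗ₜ 1)) ⊗ₜ
          ((r₁ ⊗ₜ r₂) ⊗ₜ (r₃ ⊗ₜ r₄)))) =
      (Coalgebra.counit (R := k) r₂ * Coalgebra.counit (R := k) r₃) •
        map (LinearMap.mulRight k r₁) (LinearMap.mulRight k r₄)
          (TensorProduct.comm k B A (τ (a ⊗ₜ 1))) := by
  have hcore : map (piA k A B) (piB k A B) ∘ₗ mul2 k (A ⊗[k] B) (smashMul k A B σ) ∘ₗ
      (TensorProduct.mk k _ _).flip ((r₁ ⊗ₜ r₂) ⊗ₜ (r₃ ⊗ₜ r₄)) ∘ₗ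
      (TensorProduct.comm k _ _).toLinearMap ∘ₗ smashComulCore τ ∘ₗ
      (TensorProduct.mk k _ _).flip ((1 : B) ⊗ₜ[k] (1 : B)) =
      (Coalgebra.counit (R := k) (1 : B) * Coalgebra.counit (R := k) r₂ *
          Coalgebra.counit (R := k) r₃) •
        map (LinearMap.mulRight k r₁) (LinearMap.mulRight k r₄) ∘ₗ
          (TensorProduct.comm k B A).toLinearMap ∘ₗ τ ∘ₗ (TensorProduct.mk k A B).flip 1 ∘ₗ
          (TensorProduct.lid k A).toLinearMap ∘ₗ LinearMap.rTensor A Coalgebra.counit := by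
    refine TensorProduct.ext' fun x x' => ?_
    simp only [LinearMap.coe_comp, LinearEquiv.coe_coe, Function.comp_apply, LinearMap.flip_apply,
      TensorProduct.mk_apply, smashComulCore_tmul, hsb.piA_piB_mul2_comm_map_mk_one_tmul hrc,
      LinearMap.smul_apply, LinearMap.rTensor_tmul, lid_tmul, map_smul, smul_smul]
    congr 1
    ring
  rw [smashComul_eq_comp, LinearMap.comp_apply, map_tmul, hsb.comulB_one, tmul_smul, map_smul,
    map_smul, ← smul_tmul', map_smul, map_smul]
  have := LinearMap.congr_fun hcore (Coalgebra.comul a)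
  simp only [LinearMap.coe_comp, LinearEquiv.coe_coe, Function.comp_apply, LinearMap.flip_apply,
    TensorProduct.mk_apply, LinearMap.smul_apply, Coalgebra.rTensor_counit_comul, lid_tmul,
    one_smul] at this
  rw [this, smul_smul]
  congr 1
  linear_combination (Coalgebra.counit (R := k) r₂ * Coalgebra.counit (R := k) r₃) *
    hsb.counit_one_mul_counit_one

end IsSmashBiproduct

end SmashBiproduct

/-- Identity (2): for a quasitriangular structure `R` of `A{_τ×_σ}B` with `σ` right
conormal, `Σ a_τ R¹ε_B(R²) ⊗ ε_A(R³)1_{Bτ}R⁴ = Σ R¹a_σ ε_B(R²_σ) ⊗ ε_A(R³)R⁴`. -/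
theorem stmt12 (hsb : IsSmashBiproduct k A B σ τ)
    (hrc : RightConormal k A B σ)
    (R : (A ⊗[k] B) ⊗[k] (A ⊗[k] B))
    (hqt : IsQT k (A ⊗[k] B) (smashMul k A B σ) (smashComul k A B τ)
      ((1:A) ⊗ₜ[k] (1:B)) (smashCounit k A B) R)
    (a : A)
    (ιR ι₁ ι₂ : Type) [Fintype ιR] [Fintype ι₁] [Fintype ι₂]
    (R1 : ιR → A) (R2 : ιR → B) (R3 : ιR → A) (R4 : ιR → B)
    (hR : R = ∑ ρ : ιR, (R1 ρ ⊗ₜ[k] R2 ρ) ⊗ₜ[k] (R3 ρ ⊗ₜ[k] R4 ρ))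
    (bτ : ι₁ → B) (aτ : ι₁ → A)
    (hτ : τ (a ⊗ₜ[k] (1:B)) = ∑ t : ι₁, bτ t ⊗ₜ[k] aτ t)
    (aσ : ιR → ι₂ → A) (bσ : ιR → ι₂ → B)
    (hσ : ∀ ρ, σ (R2 ρ ⊗ₜ[k] a) = ∑ n : ι₂, aσ ρ n ⊗ₜ[k] bσ ρ n) :
    ∑ t : ι₁, ∑ ρ : ιR,
        ((Coalgebra.counit : B →ₗ[k] k) (R2 ρ) * (Coalgebra.counit : A →ₗ[k] k) (R3 ρ)) •
          ((aτ t * R1 ρ) ⊗ₜ[k] (bτ t * R4 ρ))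
      = ∑ ρ : ιR, ∑ n : ι₂,
          ((Coalgebra.counit : B →ₗ[k] k) (bσ ρ n) * (Coalgebra.counit : A →ₗ[k] k) (R3 ρ)) •
            ((R1 ρ * aσ ρ n) ⊗ₜ[k] R4 ρ) := by
  obtain ⟨-, -, -, -, hqt4⟩ := hqt
  have key := congrArg (map (piA k A B) (piB k A B)) (hqt4 (a ⊗ₜ 1))
  simp only [hR, sum_tmul, tmul_sum, map_sum, hsb.piA_piB_mul2_tmul_smashComul hrc,
    hsb.piA_piB_mul2_comm_smashComul_tmul_one hrc, mul_one] at key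
  rw [Finset.sum_comm]
  convert key.symm using 2
  · simp [hτ, Finset.smul_sum]
  · simp [hσ, Finset.mul_sum, sum_tmul, Finset.smul_sum, smul_tmul', smul_smul, mul_comm]

end
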